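/- arXiv:1708.04162 — 5 statements merged into one kernel-verified Lean document; each statement's English description precedes it below -/
import Mathlib

section
/- Let G = (V,E) be a finite simple graph and let a, b : V → ℕ satisfy d(x) ≥ a(x) + b(x) for every vertex x. If there exist non-empty disjoint sets A, B ⊆ V such that A is a-internal and B is b-internal, then G has an (a,b)-internal partition. -/
open Finset

/-- The number of neighbors of `x` inside the set `A`. -/
def degIn {V : Type*} [DecidableEq V] (G : SimpleGraph V) [DecidableRel G.Adj]
    (A : Finset V) (x : V) : ℕ :=
  (A.filter (G.Adj x)).card

/-- `A` is `f`-internal: every vertex of `A` has at least `f x` neighbors in `A`. -/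
def Internal {V : Type*} [DecidableEq V] (G : SimpleGraph V) [DecidableRel G.Adj]
    (f : V → ℕ) (A : Finset V) : Prop :=
  ∀ x ∈ A, f x ≤ degIn G A x

/-- `A` is `f`-degenerate: every non-empty subset `K ⊆ A` has a vertex `x`
with at most `f x` neighbors in `K`. -/
def Degenerate {V : Type*} [DecidableEq V] (G : SimpleGraph V) [DecidableRel G.Adj]
    (f : V → ℕ) (A : Finset V) : Prop :=
  ∀ K ⊆ A, K.Nonempty → ∃ x ∈ K, degIn G K x ≤ f x

/-- `G` is 4-sparse: every set of four vertices spans at most four edges. -/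
def FourSparse {V : Type*} [Fintype V] [DecidableEq V] (G : SimpleGraph V)
    [DecidableRel G.Adj] : Prop :=
  ∀ S : Finset V, S.card = 4 → (G.edgeFinset.filter (fun e => e ∈ S.sym2)).card ≤ 4

/-- `G` has an `(a,b)`-internal partition: a partition of the vertex set into two
non-empty parts `A`, `B` with `A` being `a`-internal and `B` being `b`-internal. -/
def HasInternalPartition {V : Type*} [Fintype V] [DecidableEq V] (G : SimpleGraph V)
    [DecidableRel G.Adj] (a b : V → ℕ) : Prop :=
  ∃ A B : Finset V, A.Nonempty ∧ B.Nonempty ∧ Disjoint A B ∧ A ∪ B = Finset.univ ∧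
    Internal G a A ∧ Internal G b B

theorem stmt_5 {V : Type*} [Fintype V] [DecidableEq V] (G : SimpleGraph V)
    [DecidableRel G.Adj] (a b : V → ℕ)
    (hd : ∀ x, a x + b x ≤ G.degree x)
    (A B : Finset V) (hAne : A.Nonempty) (hBne : B.Nonempty)
    (hdisj : Disjoint A B)
    (hA : Internal G a A) (hB : Internal G b B) :
    HasInternalPartition G a b := by
  classical
  set P : Finset V → Prop := fun S => Internal G a S ∧ Disjoint S B ∧ A ⊆ S with hP
  have hPdec : DecidablePred P := fun _ => Classical.propDecidable _
  set fam : Finset (Finset V) := Finset.univ.filter P with hfam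
  have hAfam : A ∈ fam := by
    simp only [hfam, Finset.mem_filter, Finset.mem_univ, true_and, hP]
    exact ⟨hA, hdisj, subset_rfl⟩
  obtain ⟨A', hA'mem, hmax⟩ := Finset.exists_max_image fam Finset.card ⟨A, hAfam⟩
  simp only [hfam, Finset.mem_filter, Finset.mem_univ, true_and, hP] at hA'mem
  obtain ⟨hA'int, hA'disj, hAA'⟩ := hA'mem
  have key : ∀ x, x ∉ A' → x ∉ B → degIn G A' x < a x := by
    intro x hxA' hxB
    by_contra h
    push_neg at h
    have hins : insert x A' ∈ fam := by
      simp only [hfam, Finset.mem_filter, Finset.mem_univ, true_and, hP]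
      refine ⟨?_, ?_, hAA'.trans (Finset.subset_insert _ _)⟩
      · intro y hy
        rcases Finset.mem_insert.mp hy with rfl | hy
        · have : (insert y A').filter (G.Adj y) = A'.filter (G.Adj y) := by
            rw [Finset.filter_insert, if_neg (G.irrefl)]
          unfold degIn
          rw [this]; exact h
        · exact le_trans (hA'int y hy) (Finset.card_le_card
            (Finset.filter_subset_filter _ (Finset.subset_insert _ _)))
      · exact Finset.disjoint_insert_left.mpr ⟨hxB, hA'disj⟩
    have := hmax _ hins
    rw [Finset.card_insert_of_notMem hxA'] at this
    omega
  refine ⟨A', Finset.univ \ A', hAne.mono hAA', ?_, Finset.disjoint_sdiff, ?_, hA'int, ?_⟩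
  · obtain ⟨y, hy⟩ := hBne
    exact ⟨y, Finset.mem_sdiff.mpr ⟨Finset.mem_univ y, fun h => hA'disj.forall_ne_finset h hy rfl⟩⟩
  · rw [Finset.union_sdiff_self_eq_union]; simp
  · intro x hx
    have hxA' : x ∉ A' := (Finset.mem_sdiff.mp hx).2
    have hsplit : degIn G (Finset.univ \ A') x + degIn G A' x = G.degree x := by
      unfold degIn
      have h1 : (Finset.univ \ A').filter (G.Adj x) =
          Finset.univ.filter (G.Adj x) \ A'.filter (G.Adj x) := by
        ext y; simp only [Finset.mem_filter, Finset.mem_sdiff, Finset.mem_univ, true_and]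
        tauto
      rw [h1, Finset.card_sdiff_of_subset (Finset.filter_subset_filter _ (Finset.subset_univ _))]
      have h2 : (A'.filter (G.Adj x)).card ≤ (Finset.univ.filter (G.Adj x)).card :=
        Finset.card_le_card (Finset.filter_subset_filter _ (Finset.subset_univ _))
      have h3 : (Finset.univ.filter (G.Adj x)).card = G.degree x := by
        rw [← SimpleGraph.neighborFinset_eq_filter, SimpleGraph.card_neighborFinset_eq_degree]
      omega
    by_cases hxB : x ∈ B
    · have hBsub : B ⊆ Finset.univ \ A' := fun y hy =>
        Finset.mem_sdiff.mpr ⟨Finset.mem_univ y, fun h => hA'disj.forall_ne_finset h hy rfl⟩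
      exact le_trans (hB x hxB) (Finset.card_le_card
        (Finset.filter_subset_filter _ hBsub))
    · have h1 := key x hxA' hxB
      have h2 := hd x
      omega
end

section
/- Let G = (V,E) be a finite simple graph and let a, b : V → ℕ satisfy a(x) ≥ 1, b(x) ≥ 1 and d(x) ≥ a(x) + b(x) for every vertex x. Suppose G has no (a,b)-internal partition. If A is a non-empty proper subset of V that is not (a−1)-degenerate (where (a−1)(x) = a(x) − 1), then V \ A is (b−1)-degenerate (where (b−1)(x) = b(x) − 1). -/
open Finset

theorem stmt_6 {V : Type*} [Fintype V] [DecidableEq V] (G : SimpleGraph V)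
    [DecidableRel G.Adj] (a b : V → ℕ)
    (ha : ∀ x, 1 ≤ a x) (hb : ∀ x, 1 ≤ b x)
    (hd : ∀ x, a x + b x ≤ G.degree x)
    (hno : ¬ HasInternalPartition G a b)
    (A : Finset V) (hAne : A.Nonempty) (hAprop : A ≠ Finset.univ)
    (hAnondeg : ¬ Degenerate G (fun x => a x - 1) A) :
    Degenerate G (fun x => b x - 1) Aᶜ := by
  by_contra hBnondeg
  -- extract an a-internal K ⊆ A and a b-internal L ⊆ Aᶜ
  simp only [Degenerate] at hAnondeg hBnondeg
  push_neg at hAnondeg hBnondeg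
  obtain ⟨K, hKA, hKne, hK⟩ := hAnondeg
  obtain ⟨L, hLA, hLne, hL⟩ := hBnondeg
  have hKint : Internal G a K := by
    intro x hx
    have := hK x hx
    have h1 := ha x
    omega
  have hLint : Internal G b L := by
    intro x hx
    have := hL x hx
    have h1 := hb x
    omega
  apply hno
  -- grow K (as set S) until its complement is b-internal; L stays in the complement
  suffices h : ∀ n (S : Finset V), Sᶜ.card = n → S.Nonempty → Internal G a S →
      L ⊆ Sᶜ → HasInternalPartition G a b by
    exact h Kᶜ.card K rfl hKne hKint (fun x hx =>
      mem_compl.mpr (fun hxK => mem_compl.mp (hLA hx) (hKA hxK)))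
  intro n
  induction n using Nat.strong_induction_on with
  | _ n ih =>
    intro S hcard hSne hSint hLS
    by_cases hBint : Internal G b Sᶜ
    · exact ⟨S, Sᶜ, hSne, hLne.mono hLS, disjoint_compl_right, union_compl S,
        hSint, hBint⟩
    · simp only [Internal, not_forall] at hBint
      obtain ⟨x, hxB, hxd⟩ := hBint
      push_neg at hxd
      -- x has few neighbors in Sᶜ, hence many in S; move it to S
      have hsplit : degIn G S x + degIn G Sᶜ x = G.degree x := by
        classical
        have : S.filter (G.Adj x) ∪ Sᶜ.filter (G.Adj x) = G.neighborFinset x := by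
          ext y
          simp [SimpleGraph.mem_neighborFinset, or_and_right, em]
          tauto
        have hdisj : Disjoint (S.filter (G.Adj x)) (Sᶜ.filter (G.Adj x)) :=
          disjoint_filter_filter disjoint_compl_right
        rw [degIn, degIn, ← card_union_of_disjoint hdisj, this,
          SimpleGraph.degree]
      have hxS : a x + 1 ≤ degIn G S x := by
        have := hd x
        omega
      have hxL : x ∉ L := by
        intro hxL
        have h1 : degIn G L x ≤ degIn G Sᶜ x :=
          card_le_card (filter_subset_filter _ hLS)
        have h2 := hLint x hxL
        omega
      have hcard' : (insert x S)ᶜ.card < n := by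
        rw [← hcard, compl_insert]
        exact card_erase_lt_of_mem hxB
      apply ih _ hcard' (insert x S) rfl (insert_nonempty x S)
      · intro y hy
        have hmono : degIn G S y ≤ degIn G (insert x S) y :=
          card_le_card (filter_subset_filter _ (subset_insert x S))
        rcases mem_insert.mp hy with rfl | hyS
        · calc a y ≤ degIn G S y := le_of_add_le_left hxS
            _ ≤ _ := hmono
        · exact le_trans (hSint y hyS) hmono
      · intro y hy
        rw [compl_insert, mem_erase]
        exact ⟨fun h => hxL (h ▸ hy), hLS hy⟩
end

section
/- Let G = (V,E) be a finite simple graph, let a : V → ℕ, let A ⊆ V, and let x ∈ V \ A. If A is a-degenerate but A ∪ {x} is not a-degenerate, then there exists a subset S ⊆ A such that S ∪ {x} is (a+1)-internal, where (a+1)(v) = a(v) + 1. -/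
open Finset

theorem stmt_8 {V : Type*} [Fintype V] [DecidableEq V] (G : SimpleGraph V)
    [DecidableRel G.Adj] (a : V → ℕ) (A : Finset V) (x : V) (hx : x ∉ A)
    (hAdeg : Degenerate G a A) (hnot : ¬ Degenerate G a (insert x A)) :
    ∃ S ⊆ A, Internal G (fun v => a v + 1) (insert x S) := by
  simp only [Degenerate, not_forall] at hnot
  obtain ⟨K, hKsub, hKne, hK⟩ := hnot
  push_neg at hK
  have hxK : x ∈ K := by
    by_contra hxK
    have hKA : K ⊆ A := fun y hy => by
      rcases Finset.mem_insert.mp (hKsub hy) with h | h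
      · exact absurd (h ▸ hy) hxK
      · exact h
    obtain ⟨y, hyK, hyd⟩ := hAdeg K hKA hKne
    exact absurd hyd (not_le.mpr (hK y hyK))
  refine ⟨K.erase x, ?_, ?_⟩
  · intro y hy
    rcases Finset.mem_insert.mp (hKsub (Finset.mem_of_mem_erase hy)) with h | h
    · exact absurd h (Finset.ne_of_mem_erase hy)
    · exact h
  · have hKeq : insert x (K.erase x) = K := Finset.insert_erase hxK
    rw [hKeq]
    intro y hy
    exact hK y hy
end

section
/- Let G = (V,E) be a finite simple graph and let a : V → ℕ satisfy a(v) ≥ 1 for every vertex v. Let A ⊆ V be a-internal with |A| ≥ 2, and let y ∈ A satisfy d_A(y) = a(y). If A \ {y} is (a−1)-degenerate (where (a−1)(v) = a(v) − 1), then there exists z ∈ A \ {y} such that z is adjacent to y and d_A(z) = a(z). -/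
open Finset

theorem stmt_10 {V : Type*} [Fintype V] [DecidableEq V] (G : SimpleGraph V)
    [DecidableRel G.Adj] (a : V → ℕ) (ha : ∀ v, 1 ≤ a v)
    (A : Finset V) (hA : Internal G a A) (hcard : 2 ≤ A.card)
    (y : V) (hy : y ∈ A) (hdegy : degIn G A y = a y)
    (hdeg : Degenerate G (fun v => a v - 1) (A.erase y)) :
    ∃ z ∈ A.erase y, G.Adj z y ∧ degIn G A z = a z := by
  have hK : (A.erase y).Nonempty := by
    rw [← Finset.card_pos, Finset.card_erase_of_mem hy]; omega
  obtain ⟨x, hxK, hdx⟩ := hdeg (A.erase y) Finset.Subset.rfl hK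
  have hxA := Finset.mem_of_mem_erase hxK
  have hax := hA x hxA
  have heq : (A.erase y).filter (G.Adj x) = (A.filter (G.Adj x)).erase y := by
    ext w; simp only [Finset.mem_erase, Finset.mem_filter]; tauto
  have hadj : G.Adj x y := by
    by_contra h
    have hny : y ∉ A.filter (G.Adj x) := by simp [h]
    have hEq : degIn G (A.erase y) x = degIn G A x := by
      unfold degIn; rw [heq, Finset.erase_eq_of_notMem hny]
    simp only at hdx
    have := ha x
    omega
  refine ⟨x, hxK, hadj, ?_⟩
  have hyf : y ∈ A.filter (G.Adj x) := by simp [hy, hadj]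
  have hEq : degIn G (A.erase y) x = degIn G A x - 1 := by
    unfold degIn; rw [heq, Finset.card_erase_of_mem hyf]
  simp only at hdx
  have := ha x
  omega
end

section
/- Let G = (V,E) be a finite simple graph and let a : V → ℕ satisfy a(v) ≥ 1 for every vertex v. If A ⊆ V is non-empty, a-internal, and inclusion-minimal among non-empty a-internal sets (i.e., no non-empty proper subset of A is a-internal), then A is a-degenerate and A is not (a−1)-degenerate (where (a−1)(v) = a(v) − 1). -/
open Finset

theorem stmt_14 {V : Type*} [Fintype V] [DecidableEq V] (G : SimpleGraph V)
    [DecidableRel G.Adj] (a : V → ℕ) (ha : ∀ v, 1 ≤ a v)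
    (A : Finset V) (hAne : A.Nonempty) (hA : Internal G a A)
    (hmin : ∀ S ⊆ A, S.Nonempty → Internal G a S → S = A) :
    Degenerate G a A ∧ ¬ Degenerate G (fun v => a v - 1) A := by
  constructor
  · intro K hK hKne
    by_contra hcon
    push_neg at hcon
    have hKint : Internal G a K := fun x hx => (hcon x hx).le
    have hKA : K = A := hmin K hK hKne hKint
    subst hKA
    obtain ⟨v, hv⟩ := hKne
    have herase : ∀ x, degIn G K x - 1 ≤ degIn G (K.erase v) x := by
      intro x
      unfold degIn
      rw [Finset.filter_erase]
      exact Finset.pred_card_le_card_erase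
    rcases (K.erase v).eq_empty_or_nonempty with he | hne
    · have hKv : K = {v} := by
        apply Finset.eq_singleton_iff_unique_mem.mpr
        refine ⟨hv, fun y hy => ?_⟩
        by_contra hyv
        exact (Finset.notMem_empty y) (he ▸ Finset.mem_erase.mpr ⟨hyv, hy⟩)
      have : degIn G K v = 0 := by
        subst hKv
        unfold degIn
        rw [Finset.card_eq_zero, Finset.filter_eq_empty_iff]
        intro y hy
        rw [Finset.mem_singleton] at hy
        subst hy
        exact G.irrefl
      have := hcon v hv
      omega
    · have hint : Internal G a (K.erase v) := by
        intro x hx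
        have h1 := hcon x (Finset.mem_of_mem_erase hx)
        have h2 := herase x
        omega
      have heq := hmin (K.erase v) (Finset.erase_subset _ _) hne hint
      exact (Finset.notMem_erase v K) (heq.symm ▸ hv)
  · intro h
    obtain ⟨x, hx, hle⟩ := h A le_rfl hAne
    have h1 := hA x hx
    have h2 := ha x
    simp only at hle
    omega
end
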